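/- Let T be the random weighted shift associated with i.i.d. nonnegative bounded random variables (X_n)_{n≥1}, and assume the essential range of X_1 equals the interval [0,1]. Let A be a unilateral weighted shift on H with nonnegative weights. Then P({ω : A ⊲ T(ω)}) = 1 if ‖A‖ ≤ 1, and P({ω : A ⊲ T(ω)}) = 0 if ‖A‖ > 1. Here, for bounded operators A, B, the relation A ⊲ B means ‖p(A, A*)‖ ≤ ‖p(B, B*)‖ for every polynomial p in two free (noncommuting) variables, i.e., for every element p of the free complex algebra on two generators, where p(A, A*) denotes the image of p under the algebra homomorphism sending the two generators to A and its adjoint A* respectively. -/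

import Mathlib

open MeasureTheory ProbabilityTheory Filter
open scoped ENNReal NNReal

set_option maxHeartbeats 1000000

noncomputable section

/-- `ℓ²(ℕ, ℂ)`, the separable complex Hilbert space. -/
abbrev Hil : Type := lp (fun _ : ℕ => ℂ) 2

/-- The orthonormal basis `(e_n)` of `ℓ²(ℕ, ℂ)` (0-indexed: `el n` is the paper's `e_{n+1}`). -/
def el (n : ℕ) : Hil := lp.single 2 n 1

/-- The essential range of a real random variable: the set of `y` such that
`P(|f - y| < ε) > 0` for every `ε > 0`. -/
def essRange {Ω : Type*} [MeasurableSpace Ω] (P : Measure Ω) (f : Ω → ℝ) : Set ℝ :=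
  {y : ℝ | ∀ ε > 0, 0 < P {ω | |f ω - y| < ε}}

/-- `A ⊲ B`: for every polynomial `p` in two free (noncommuting) variables,
`‖p(A, A*)‖ ≤ ‖p(B, B*)‖`, where `p(A, A*)` is the image of `p` under the algebra
homomorphism from the free algebra on two generators sending the generators to `A`, `A*`. -/
def OpDom (A B : Hil →L[ℂ] Hil) : Prop :=
  ∀ p : FreeAlgebra ℂ (Fin 2),
    ‖(FreeAlgebra.lift ℂ ![A, ContinuousLinearMap.adjoint A]) p‖ ≤
      ‖(FreeAlgebra.lift ℂ ![B, ContinuousLinearMap.adjoint B]) p‖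

local notation "⟪" x ", " y "⟫" => @inner ℂ _ _ x y

lemma el_coord (n m : ℕ) : (el n : ∀ _ : ℕ, ℂ) m = if m = n then 1 else 0 := by
  simp [el, lp.single_apply, Pi.single_apply]

lemma inner_el (n : ℕ) (v : Hil) : ⟪el n, v⟫ = v n := by
  simp [el, lp.inner_single_left]

lemma inner_el_el (n m : ℕ) : ⟪el n, el m⟫ = if n = m then 1 else 0 := by
  rw [inner_el, el_coord]

lemma coord_ext {v w : Hil} (h : ∀ n, ⟪el n, v⟫ = ⟪el n, w⟫) : v = w := by
  apply lp.ext; funext n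
  have := h n; rwa [inner_el, inner_el] at this

lemma norm_el (n : ℕ) : ‖el n‖ = 1 := by
  have h : ⟪el n, el n⟫ = 1 := by rw [inner_el_el]; simp
  have h2 := @inner_self_eq_norm_sq ℂ _ _ _ _ (el n)
  rw [h] at h2
  simp at h2
  nlinarith [norm_nonneg (el n)]

lemma hasSum_el (v : Hil) : HasSum (fun n => (v n : ℂ) • el n) v := by
  have := lp.hasSum_single (E := fun _ : ℕ => ℂ) (p := 2) (by norm_num) v
  convert this using 2 with n
  rw [el, ← lp.single_smul]
  congr 1
  simp

lemma clm_ext_el {S T' : Hil →L[ℂ] Hil} (h : ∀ n, S (el n) = T' (el n)) : S = T' := by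
  refine ContinuousLinearMap.ext fun x => ?_
  have hs := (hasSum_el x).mapL S
  have ht := (hasSum_el x).mapL T'
  simp only [_root_.map_smul] at hs ht
  simp only [h] at hs
  exact hs.unique ht

lemma htwo : ENNReal.toReal 2 = 2 := by norm_num

lemma norm_sq_eq (v : Hil) : ‖v‖ ^ (2:ℕ) = ∑' n, ‖v n‖ ^ (2:ℕ) := by
  have := lp.norm_rpow_eq_tsum (p := 2) (E := fun _ : ℕ => ℂ) (by rw [htwo]; norm_num) v
  rw [htwo] at this
  have e : ∀ x : ℝ, x ^ (2:ℝ) = x ^ (2:ℕ) := fun x => by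
    rw [← Real.rpow_natCast x 2]; norm_num
  simp only [e] at this
  exact this

lemma summable_norm_sq (v : Hil) : Summable (fun n => ‖v n‖ ^ (2:ℕ)) := by
  have := (lp.memℓp v).summable (p := 2) (by rw [htwo]; norm_num)
  rw [htwo] at this
  have e : ∀ x : ℝ, x ^ (2:ℝ) = x ^ (2:ℕ) := fun x => by
    rw [← Real.rpow_natCast x 2]; norm_num
  simp only [e] at this
  exact this

/-- coordinates of the image under a weighted-shift-like operator -/
lemma shift_coord {S : Hil →L[ℂ] Hil} {w : ℕ → ℂ}
    (hS : ∀ n, S (el n) = w n • el (n+1)) (x : Hil) :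
    (S x) 0 = 0 ∧ ∀ m, (S x) (m + 1) = w m * x m := by
  have hasx : HasSum (fun n => (x n : ℂ) • el n) x := by
    have := lp.hasSum_single (E := fun _ : ℕ => ℂ) (p := 2) (by norm_num) x
    convert this using 2 with n
    rw [el, ← lp.single_smul]; congr 1; simp
  have h1 := (hasx.mapL S)
  simp only [_root_.map_smul, hS] at h1
  constructor
  · have h2 := h1.mapL (innerSL ℂ (el 0))
    have h3 : ∀ n, (innerSL ℂ (el 0)) ((x n : ℂ) • (w n • el (n+1))) = 0 := by
      intro n
      simp only [innerSL_apply_apply, inner_smul_right, inner_el_el]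
      simp
    simp only [h3] at h2
    have := h2.unique hasSum_zero
    rw [innerSL_apply_apply, inner_el] at this
    exact this
  · intro m
    have h2 := h1.mapL (innerSL ℂ (el (m+1)))
    have h3 : ∀ n, (innerSL ℂ (el (m+1))) ((x n : ℂ) • (w n • el (n+1)))
        = if n = m then w m * x m else 0 := by
      intro n
      simp only [innerSL_apply_apply, inner_smul_right, inner_el_el]
      by_cases h : n = m
      · subst h; simp [mul_comm]
      · have : ¬ (m + 1 = n + 1) := by omega
        simp [this, h, Ne.symm h]
    simp only [h3] at h2
    have := h2.unique (hasSum_ite_eq m (w m * x m))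
    rw [innerSL_apply_apply, inner_el] at this
    exact this
lemma shift_norm_le {S : Hil →L[ℂ] Hil} {w : ℕ → ℝ} {M : ℝ} (hM : 0 ≤ M)
    (hS : ∀ n, S (el n) = (w n : ℂ) • el (n+1)) (hw : ∀ n, |w n| ≤ M) :
    ‖S‖ ≤ M := by
  refine ContinuousLinearMap.opNorm_le_bound S hM (fun x => ?_)
  obtain ⟨h0, hsucc⟩ := shift_coord (w := fun n => (w n : ℂ)) hS x
  have key : ‖S x‖ ^ (2:ℕ) ≤ (M * ‖x‖) ^ (2:ℕ) := by
    rw [norm_sq_eq]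
    have hsum := summable_norm_sq (S x)
    rw [hsum.tsum_eq_zero_add, h0]
    simp only [norm_zero, hsucc]
    have hzero : (0:ℝ) ^ (2:ℕ) = 0 := by norm_num
    rw [hzero, zero_add]
    have hle : ∀ m, ‖(w m : ℂ) * x m‖ ^ (2:ℕ) ≤ M ^ (2:ℕ) * ‖x m‖ ^ (2:ℕ) := by
      intro m
      rw [norm_mul, mul_pow]
      have h1 : ‖(w m : ℂ)‖ = |w m| := by simp
      gcongr
      rw [h1]; exact hw m
    have hsum1 : Summable (fun m => ‖(w m : ℂ) * x m‖ ^ (2:ℕ)) := by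
      have h4 := hsum.comp_injective (add_left_injective 1)
      refine h4.congr (fun m => ?_)
      simp only [Function.comp_apply, hsucc]
    have hsum2 : Summable (fun m => M ^ (2:ℕ) * ‖(x m : ℂ)‖ ^ (2:ℕ)) :=
      (summable_norm_sq x).mul_left _
    have step1 : ∑' m, ‖(w m : ℂ) * x m‖ ^ (2:ℕ) ≤ ∑' m, M ^ (2:ℕ) * ‖x m‖ ^ (2:ℕ) :=
      Summable.tsum_le_tsum hle hsum1 hsum2
    have step2 : ∑' m, M ^ (2:ℕ) * ‖(x m : ℂ)‖ ^ (2:ℕ) = M ^ (2:ℕ) * ‖x‖ ^ (2:ℕ) := by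
      rw [tsum_mul_left, ← norm_sq_eq]
    rw [mul_pow]
    rw [step2] at step1
    exact step1
  exact (pow_le_pow_iff_left₀ (norm_nonneg _) (by positivity) (by norm_num)).mp key

/-! ### The isometric shift by `k` -/

def shiftFun (k : ℕ) (x : ℕ → ℂ) : ℕ → ℂ := fun n => if k ≤ n then x (n - k) else 0

lemma shiftFun_memlp (k : ℕ) (x : Hil) : Memℓp (shiftFun k x) 2 := by
  apply memℓp_gen
  rw [htwo]
  have e : ∀ y : ℝ, y ^ (2:ℝ) = y ^ (2:ℕ) := fun y => by
    rw [← Real.rpow_natCast y 2]; norm_num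
  simp only [e]
  have hinj : Function.Injective (fun n : ℕ => n + k) := add_left_injective k
  have hzero : ∀ m ∉ Set.range (fun n : ℕ => n + k), ‖shiftFun k x m‖ ^ (2:ℕ) = 0 := by
    intro m hm
    have : ¬ k ≤ m := by
      intro hk
      exact hm ⟨m - k, by simp; omega⟩
    simp [shiftFun, this]
  rw [← hinj.summable_iff hzero]
  have : ∀ n, ((fun m => ‖shiftFun k x m‖ ^ (2:ℕ)) ∘ fun n : ℕ => n + k) n = ‖x n‖ ^ (2:ℕ) := by
    intro n
    simp [shiftFun, Function.comp, Nat.le_add_left, Nat.add_sub_cancel]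
  exact Summable.congr (summable_norm_sq x) (fun n => (this n).symm)

def Vlin (k : ℕ) : Hil →ₗ[ℂ] Hil where
  toFun x := ⟨shiftFun k x, shiftFun_memlp k x⟩
  map_add' x y := by
    apply lp.ext; funext n
    simp only [shiftFun, lp.coeFn_add, Pi.add_apply]
    split <;> simp
  map_smul' c x := by
    apply lp.ext; funext n
    simp only [shiftFun, lp.coeFn_smul, Pi.smul_apply, RingHom.id_apply, smul_eq_mul]
    split <;> simp

lemma Vlin_coord (k : ℕ) (x : Hil) (n : ℕ) : (Vlin k x) n = shiftFun k x n := rfl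

lemma Vlin_norm (k : ℕ) (x : Hil) : ‖Vlin k x‖ = ‖x‖ := by
  have key : ‖Vlin k x‖ ^ (2:ℕ) = ‖x‖ ^ (2:ℕ) := by
    rw [norm_sq_eq, norm_sq_eq]
    have hinj : Function.Injective (fun n : ℕ => n + k) := add_left_injective k
    have hzero : Function.support (fun m => ‖(Vlin k x) m‖ ^ (2:ℕ)) ⊆
        Set.range (fun n : ℕ => n + k) := by
      intro m hm
      by_contra hr
      have : ¬ k ≤ m := by intro hk; exact hr ⟨m - k, by simp; omega⟩
      apply hm
      simp [Vlin_coord, shiftFun, this]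
    rw [← hinj.tsum_eq hzero]
    congr 1; funext n
    simp [Vlin_coord, shiftFun, Nat.le_add_left, Nat.add_sub_cancel]
  refine le_antisymm ?_ ?_
  · exact (pow_le_pow_iff_left₀ (norm_nonneg _) (norm_nonneg _) (by norm_num)).mp key.le
  · exact (pow_le_pow_iff_left₀ (norm_nonneg _) (norm_nonneg _) (by norm_num)).mp key.ge

def Vop (k : ℕ) : Hil →L[ℂ] Hil :=
  LinearMap.mkContinuous (Vlin k) 1 (fun x => by rw [Vlin_norm, one_mul])

lemma Vop_norm_le (k : ℕ) : ‖Vop k‖ ≤ 1 :=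
  LinearMap.mkContinuous_norm_le _ zero_le_one _

lemma Vop_el (k n : ℕ) : Vop k (el n) = el (n + k) := by
  apply lp.ext; funext m
  show shiftFun k (el n) m = (el (n+k) : ∀ _ : ℕ, ℂ) m
  rw [el_coord]
  simp only [shiftFun, el_coord]
  split
  · next h => split <;> next h2 => split_ifs with h3 <;> first | rfl | omega
  · next h => rw [if_neg (by omega)]

/-! ### Adjoints -/

open ContinuousLinearMap in
lemma adj_norm (S : Hil →L[ℂ] Hil) : ‖adjoint S‖ = ‖S‖ :=
  ContinuousLinearMap.adjoint.norm_map S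

open ContinuousLinearMap in
lemma adj_sub (S R : Hil →L[ℂ] Hil) : adjoint (S - R) = adjoint S - adjoint R :=
  map_sub ContinuousLinearMap.adjoint S R

open ContinuousLinearMap in
lemma adjoint_shift {B : Hil →L[ℂ] Hil} {w : ℕ → ℝ} (hB : ∀ n, B (el n) = (w n:ℂ) • el (n+1)) :
    (adjoint B) (el 0) = 0 ∧ ∀ n, (adjoint B) (el (n+1)) = (w n : ℂ) • el n := by
  have coord : ∀ j m, ⟪el j, (adjoint B) (el m)⟫ = if m = j + 1 then (w j : ℂ) else 0 := by
    intro j m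
    rw [ContinuousLinearMap.adjoint_inner_right, hB j, inner_smul_left, inner_el_el]
    by_cases h : j + 1 = m
    · rw [if_pos h, if_pos h.symm, Complex.conj_ofReal, mul_one]
    · rw [if_neg h, if_neg (fun hh => h hh.symm), mul_zero]
  constructor
  · refine coord_ext (fun j => ?_)
    rw [coord, inner_zero_right, if_neg (by omega)]
  · intro n
    refine coord_ext (fun j => ?_)
    rw [coord, inner_smul_right, inner_el_el]
    by_cases h : j = n
    · subst h; simp
    · rw [if_neg (by omega), if_neg h, mul_zero]

open ContinuousLinearMap in
lemma Vop_adj_el (k m : ℕ) :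
    (adjoint (Vop k)) (el m) = if k ≤ m then el (m - k) else 0 := by
  refine coord_ext (fun j => ?_)
  rw [ContinuousLinearMap.adjoint_inner_right, Vop_el, inner_el_el]
  by_cases h2 : k ≤ m
  · rw [if_pos h2, inner_el_el]
    by_cases h1 : j + k = m
    · rw [if_pos h1, if_pos (by omega)]
    · rw [if_neg h1, if_neg (by omega)]
  · rw [if_neg h2, inner_zero_right, if_neg (by omega)]

open ContinuousLinearMap in
lemma Vop_adj_comp (k : ℕ) : (adjoint (Vop k)) ∘L (Vop k) = 1 := by
  apply clm_ext_el
  intro n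
  simp only [ContinuousLinearMap.comp_apply, Vop_el, Vop_adj_el, ContinuousLinearMap.one_apply]
  rw [if_pos (by omega)]
  congr 1; omega

def Rop (c : ℝ) (i j : ℕ) : Hil →L[ℂ] Hil := (c:ℂ) • ((innerSL ℂ (el i)).smulRight (el j))

lemma Rop_apply (c : ℝ) (i j : ℕ) (x : Hil) : Rop c i j x = ((c : ℂ) * ⟪el i, x⟫) • el j := by
  rw [Rop]
  rw [ContinuousLinearMap.smul_apply, ContinuousLinearMap.smulRight_apply, innerSL_apply_apply, smul_smul]

lemma Rop_el (c : ℝ) (i j n : ℕ) :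
    Rop c i j (el n) = if n = i then (c:ℂ) • el j else 0 := by
  rw [Rop_apply, inner_el_el]
  by_cases h : i = n
  · rw [if_pos h, if_pos h.symm, mul_one]
  · rw [if_neg h, if_neg (fun hh => h hh.symm), mul_zero, zero_smul]

open ContinuousLinearMap in
lemma Rop_adjoint (c : ℝ) (i j : ℕ) : adjoint (Rop c i j) = Rop c j i := by
  symm
  rw [ContinuousLinearMap.eq_adjoint_iff]
  intro x y
  rw [Rop_apply, Rop_apply, inner_smul_left, inner_smul_right]
  rw [map_mul, Complex.conj_ofReal, ← inner_conj_symm x (el j)]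
  ring_nf

lemma Rop_norm_le (c : ℝ) (i j : ℕ) : ‖Rop c i j‖ ≤ |c| := by
  refine ContinuousLinearMap.opNorm_le_bound _ (abs_nonneg c) (fun x => ?_)
  rw [Rop_apply, norm_smul]
  have h1 : ‖el j‖ = 1 := norm_el j
  have h4 : ‖el i‖ = 1 := norm_el i
  rw [h1, mul_one, norm_mul]
  have h2 : ‖⟪el i, x⟫‖ ≤ ‖x‖ := by
    have := norm_inner_le_norm (𝕜 := ℂ) (el i) x
    rwa [h4, one_mul] at this
  have h3 : ‖(c:ℂ)‖ = |c| := by simp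
  rw [h3]
  exact mul_le_mul_of_nonneg_left h2 (abs_nonneg c)

/-! ### Free algebra machinery -/

lemma fin2_cases (x : Fin 2) : x = 0 ∨ x = 1 := by omega

open ContinuousLinearMap in
def lft (S : Hil →L[ℂ] Hil) : FreeAlgebra ℂ (Fin 2) →ₐ[ℂ] (Hil →L[ℂ] Hil) :=
  FreeAlgebra.lift ℂ ![S, adjoint S]

open ContinuousLinearMap in
lemma lft_ι0 (S : Hil →L[ℂ] Hil) : lft S (FreeAlgebra.ι ℂ 0) = S := by
  rw [lft, FreeAlgebra.lift_ι_apply]; rfl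

open ContinuousLinearMap in
lemma lft_ι1 (S : Hil →L[ℂ] Hil) : lft S (FreeAlgebra.ι ℂ 1) = adjoint S := by
  rw [lft, FreeAlgebra.lift_ι_apply]; rfl

open ContinuousLinearMap in
lemma lift_intertwine {S S' V : Hil →L[ℂ] Hil} (h1 : S ∘L V = V ∘L S')
    (h2 : (adjoint S) ∘L V = V ∘L adjoint S') (p : FreeAlgebra ℂ (Fin 2)) :
    (lft S p) ∘L V = V ∘L (lft S' p) := by
  induction p using FreeAlgebra.induction with
  | grade0 r =>
    rw [AlgHom.commutes, AlgHom.commutes]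
    rw [Algebra.algebraMap_eq_smul_one]
    rw [ContinuousLinearMap.smul_comp, ContinuousLinearMap.comp_smul,
      ContinuousLinearMap.one_def, ContinuousLinearMap.id_comp, ContinuousLinearMap.comp_id]
  | grade1 x =>
    rcases fin2_cases x with hx | hx <;> subst hx
    · rw [lft_ι0, lft_ι0]; exact h1
    · rw [lft_ι1, lft_ι1]; exact h2
  | mul a b ha hb =>
    rw [map_mul, map_mul, ContinuousLinearMap.mul_def, ContinuousLinearMap.mul_def]
    rw [ContinuousLinearMap.comp_assoc, hb, ← ContinuousLinearMap.comp_assoc, ha,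
      ContinuousLinearMap.comp_assoc]
  | add a b ha hb =>
    rw [map_add, map_add, ContinuousLinearMap.add_comp, ContinuousLinearMap.comp_add, ha, hb]

open ContinuousLinearMap in
lemma lift_bound_lip (p : FreeAlgebra ℂ (Fin 2)) :
    ∃ M L : ℝ, 0 ≤ M ∧ 0 ≤ L ∧ ∀ S S' : Hil →L[ℂ] Hil, ‖S‖ ≤ 1 → ‖S'‖ ≤ 1 →
      ‖lft S p‖ ≤ M ∧ ‖lft S p - lft S' p‖ ≤ L * ‖S - S'‖ := by
  induction p using FreeAlgebra.induction with
  | grade0 r =>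
    refine ⟨‖r‖, 0, norm_nonneg r, le_refl 0, fun S S' hS hS' => ⟨?_, ?_⟩⟩
    · rw [AlgHom.commutes, Algebra.algebraMap_eq_smul_one]
      calc ‖r • (1 : Hil →L[ℂ] Hil)‖ ≤ ‖r‖ * ‖(1 : Hil →L[ℂ] Hil)‖ :=
            norm_smul_le r (1 : Hil →L[ℂ] Hil)
        _ ≤ ‖r‖ * 1 := by
            refine mul_le_mul_of_nonneg_left ?_ (norm_nonneg r)
            rw [ContinuousLinearMap.one_def]
            exact ContinuousLinearMap.norm_id_le
        _ = ‖r‖ := mul_one _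
    · rw [AlgHom.commutes, AlgHom.commutes, sub_self, norm_zero, zero_mul]
  | grade1 x =>
    refine ⟨1, 1, zero_le_one, zero_le_one, fun S S' hS hS' => ?_⟩
    rcases fin2_cases x with hx | hx <;> subst hx
    · rw [lft_ι0, lft_ι0]; exact ⟨hS, by rw [one_mul]⟩
    · rw [lft_ι1, lft_ι1]
      refine ⟨by rw [adj_norm]; exact hS, ?_⟩
      rw [← adj_sub, adj_norm, one_mul]
  | mul a b ha hb =>
    obtain ⟨Ma, La, hMa, hLa, Ha⟩ := ha
    obtain ⟨Mb, Lb, hMb, hLb, Hb⟩ := hb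
    refine ⟨Ma * Mb, Ma * Lb + La * Mb, by positivity, by positivity,
      fun S S' hS hS' => ⟨?_, ?_⟩⟩
    · rw [map_mul, ContinuousLinearMap.mul_def]
      calc ‖lft S a ∘L lft S b‖ ≤ ‖lft S a‖ * ‖lft S b‖ := ContinuousLinearMap.opNorm_comp_le _ _
        _ ≤ Ma * Mb := mul_le_mul (Ha S S' hS hS').1 (Hb S S' hS hS').1 (norm_nonneg _) hMa
    · rw [map_mul, map_mul]
      have key : lft S a * lft S b - lft S' a * lft S' b
          = lft S a * (lft S b - lft S' b) + (lft S a - lft S' a) * lft S' b := by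
        rw [mul_sub, sub_mul]; abel
      rw [key]
      calc ‖lft S a * (lft S b - lft S' b) + (lft S a - lft S' a) * lft S' b‖
          ≤ ‖lft S a * (lft S b - lft S' b)‖ + ‖(lft S a - lft S' a) * lft S' b‖ := norm_add_le _ _
        _ ≤ ‖lft S a‖ * ‖lft S b - lft S' b‖ + ‖lft S a - lft S' a‖ * ‖lft S' b‖ := by
            refine add_le_add ?_ ?_
            · exact norm_mul_le _ _
            · exact norm_mul_le _ _
        _ ≤ Ma * (Lb * ‖S - S'‖) + (La * ‖S - S'‖) * Mb := by
            refine add_le_add ?_ ?_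
            · exact mul_le_mul (Ha S S' hS hS').1 (Hb S S' hS hS').2 (norm_nonneg _) hMa
            · refine mul_le_mul (Ha S S' hS hS').2 ?_ (norm_nonneg _) (by positivity)
              exact (Hb S' S hS' hS).1
        _ = (Ma * Lb + La * Mb) * ‖S - S'‖ := by ring
  | add a b ha hb =>
    obtain ⟨Ma, La, hMa, hLa, Ha⟩ := ha
    obtain ⟨Mb, Lb, hMb, hLb, Hb⟩ := hb
    refine ⟨Ma + Mb, La + Lb, by positivity, by positivity, fun S S' hS hS' => ⟨?_, ?_⟩⟩
    · rw [map_add]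
      calc ‖lft S a + lft S b‖ ≤ ‖lft S a‖ + ‖lft S b‖ := norm_add_le _ _
        _ ≤ Ma + Mb := add_le_add (Ha S S' hS hS').1 (Hb S S' hS hS').1
    · rw [map_add, map_add]
      have key : lft S a + lft S b - (lft S' a + lft S' b)
          = (lft S a - lft S' a) + (lft S b - lft S' b) := by abel
      rw [key]
      calc ‖(lft S a - lft S' a) + (lft S b - lft S' b)‖
          ≤ ‖lft S a - lft S' a‖ + ‖lft S b - lft S' b‖ := norm_add_le _ _
        _ ≤ La * ‖S - S'‖ + Lb * ‖S - S'‖ :=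
            add_le_add (Ha S S' hS hS').2 (Hb S S' hS hS').2
        _ = (La + Lb) * ‖S - S'‖ := by ring

open ContinuousLinearMap in
lemma lift_sot {S : ℕ → Hil →L[ℂ] Hil} {A : Hil →L[ℂ] Hil}
    (hS : ∀ m, ‖S m‖ ≤ 1) (hA : ‖A‖ ≤ 1)
    (h1 : ∀ x, Tendsto (fun m => S m x) atTop (nhds (A x)))
    (h2 : ∀ x, Tendsto (fun m => (adjoint (S m)) x) atTop (nhds ((adjoint A) x)))
    (p : FreeAlgebra ℂ (Fin 2)) (x : Hil) :
    Tendsto (fun m => lft (S m) p x) atTop (nhds (lft A p x)) := by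
  induction p using FreeAlgebra.induction generalizing x with
  | grade0 r =>
    have e : ∀ (W : Hil →L[ℂ] Hil), lft W (algebraMap ℂ (FreeAlgebra ℂ (Fin 2)) r)
        = algebraMap ℂ (Hil →L[ℂ] Hil) r := fun W => AlgHom.commutes _ r
    simp only [e]
    exact tendsto_const_nhds
  | grade1 i =>
    rcases fin2_cases i with hx | hx <;> subst hx
    · simp only [lft_ι0]; exact h1 x
    · simp only [lft_ι1]; exact h2 x
  | add a b ha hb =>
    simp only [map_add, ContinuousLinearMap.add_apply]
    exact (ha x).add (hb x)
  | mul a b ha hb =>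
    simp only [map_mul, ContinuousLinearMap.mul_apply]
    obtain ⟨Ma, La, hMa, hLa, Ha⟩ := lift_bound_lip a
    rw [tendsto_iff_norm_sub_tendsto_zero]
    have hbound : ∀ m, ‖lft (S m) a (lft (S m) b x) - lft A a (lft A b x)‖
        ≤ Ma * ‖lft (S m) b x - lft A b x‖ + ‖lft (S m) a (lft A b x) - lft A a (lft A b x)‖ := by
      intro m
      have e : lft (S m) a (lft (S m) b x) - lft A a (lft A b x)
          = lft (S m) a (lft (S m) b x - lft A b x)
            + (lft (S m) a (lft A b x) - lft A a (lft A b x)) := by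
        rw [map_sub]; abel
      rw [e]
      refine (norm_add_le _ _).trans (add_le_add ?_ (le_refl _))
      calc ‖lft (S m) a (lft (S m) b x - lft A b x)‖
          ≤ ‖lft (S m) a‖ * ‖lft (S m) b x - lft A b x‖ := ContinuousLinearMap.le_opNorm _ _
        _ ≤ Ma * ‖lft (S m) b x - lft A b x‖ := by
            refine mul_le_mul_of_nonneg_right ?_ (norm_nonneg _)
            exact (Ha (S m) A (hS m) hA).1
    refine squeeze_zero (fun m => norm_nonneg _) hbound ?_
    have l1 : Tendsto (fun m => ‖lft (S m) b x - lft A b x‖) atTop (nhds 0) := by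
      rw [← tendsto_iff_norm_sub_tendsto_zero]
      exact hb x
    have l2 : Tendsto (fun m => ‖lft (S m) a (lft A b x) - lft A a (lft A b x)‖) atTop (nhds 0) := by
      rw [← tendsto_iff_norm_sub_tendsto_zero]
      exact ha (lft A b x)
    have := (l1.const_mul Ma).add l2
    simpa using this

lemma fa_lift_eq_lft (S : Hil →L[ℂ] Hil) (p : FreeAlgebra ℂ (Fin 2)) :
    (FreeAlgebra.lift ℂ ![S, ContinuousLinearMap.adjoint S]) p = lft S p := rfl

lemma sot_of_basis {S : ℕ → Hil →L[ℂ] Hil} {A : Hil →L[ℂ] Hil}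
    (hS : ∀ m, ‖S m‖ ≤ 1) (hA : ‖A‖ ≤ 1)
    (h : ∀ n, Tendsto (fun m => S m (el n)) atTop (nhds (A (el n)))) (x : Hil) :
    Tendsto (fun m => S m x) atTop (nhds (A x)) := by
  refine Metric.tendsto_atTop.mpr (fun ε hε => ?_)
  have hε3 : 0 < ε / 3 := by linarith
  obtain ⟨t0, ht0⟩ : ∃ s : Finset ℕ, dist (∑ n ∈ s, (x n : ℂ) • el n) x < ε / 3 :=
    (Metric.tendsto_nhds.mp (hasSum_el x) (ε/3) hε3).exists
  set y : Hil := ∑ n ∈ t0, (x n : ℂ) • el n with hy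
  have claim : Tendsto (fun m => S m y) atTop (nhds (A y)) := by
    have e1 : ∀ m, S m y = ∑ n ∈ t0, (x n : ℂ) • S m (el n) := by
      intro m; rw [hy, map_sum]; simp only [_root_.map_smul]
    have e2 : A y = ∑ n ∈ t0, (x n : ℂ) • A (el n) := by
      rw [hy, map_sum]; simp only [_root_.map_smul]
    simp only [e1, e2]
    exact tendsto_finset_sum t0 (fun n _ => (h n).const_smul _)
  obtain ⟨N, hN⟩ := Metric.tendsto_atTop.mp claim (ε/3) hε3
  refine ⟨N, fun m hm => ?_⟩
  have hxy : ‖x - y‖ < ε / 3 := by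
    rw [← dist_eq_norm, dist_comm]; exact ht0
  have key : S m x - A x = S m (x - y) + (S m y - A y) + A (y - x) := by
    rw [map_sub, map_sub]; abel
  rw [dist_eq_norm, key]
  have b1 : ‖S m (x - y)‖ ≤ ‖x - y‖ := by
    calc ‖S m (x - y)‖ ≤ ‖S m‖ * ‖x - y‖ := ContinuousLinearMap.le_opNorm _ _
      _ ≤ 1 * ‖x - y‖ := mul_le_mul_of_nonneg_right (hS m) (norm_nonneg _)
      _ = ‖x - y‖ := one_mul _
  have b2 : ‖S m y - A y‖ < ε / 3 := by
    have := hN m hm; rwa [dist_eq_norm] at this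
  have b3 : ‖A (y - x)‖ ≤ ‖y - x‖ := by
    calc ‖A (y - x)‖ ≤ ‖A‖ * ‖y - x‖ := ContinuousLinearMap.le_opNorm _ _
      _ ≤ 1 * ‖y - x‖ := mul_le_mul_of_nonneg_right hA (norm_nonneg _)
      _ = ‖y - x‖ := one_mul _
  have hyx : ‖y - x‖ < ε / 3 := by rwa [norm_sub_rev] at hxy
  calc ‖S m (x - y) + (S m y - A y) + A (y - x)‖
      ≤ ‖S m (x - y) + (S m y - A y)‖ + ‖A (y - x)‖ := norm_add_le _ _
    _ ≤ ‖S m (x - y)‖ + ‖S m y - A y‖ + ‖A (y - x)‖ := by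
        have := norm_add_le (S m (x - y)) (S m y - A y); linarith
    _ < ε/3 + ε/3 + ε/3 := by linarith
    _ = ε := by ring

open ContinuousLinearMap in
lemma det_core {A B : Hil →L[ℂ] Hil} {a w : ℕ → ℝ}
    (hA : ∀ n, A (el n) = (a n : ℂ) • el (n+1))
    (hB : ∀ n, B (el n) = (w n : ℂ) • el (n+1))
    (ha0 : ∀ n, 0 ≤ a n) (ha1 : ∀ n, a n ≤ 1)
    (hw0 : ∀ n, 0 ≤ w n) (hw1 : ∀ n, w n ≤ 1)
    (k : ℕ → ℕ) (hk : ∀ m, 1 ≤ k m)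
    (hnear : ∀ m : ℕ, w (k m - 1) < 1/(m+1))
    (hmatch : ∀ m j : ℕ, j ≤ m → |w (k m + j) - a j| < 1/(m+1)) :
    OpDom A B := by
  classical
  have hAnorm : ‖A‖ ≤ 1 := shift_norm_le zero_le_one hA
    (fun n => abs_le.mpr ⟨by linarith [ha0 n], ha1 n⟩)
  have hBnorm : ‖B‖ ≤ 1 := shift_norm_le zero_le_one hB
    (fun n => abs_le.mpr ⟨by linarith [hw0 n], hw1 n⟩)
  -- the modified operators
  set dw : ℕ → ℕ → ℝ := fun m n => if n = k m - 1 then 0 else w n with hdw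
  set D : ℕ → Hil →L[ℂ] Hil := fun m => B - Rop (w (k m - 1)) (k m - 1) (k m) with hD
  have Del : ∀ m n, D m (el n) = ((dw m n : ℝ) : ℂ) • el (n+1) := by
    intro m n
    rw [hD]
    simp only [ContinuousLinearMap.sub_apply, hB, Rop_el]
    by_cases h : n = k m - 1
    · rw [if_pos h, hdw]
      simp only [if_pos h]
      have e1 : k m = n + 1 := by have := hk m; omega
      rw [← h, e1, Complex.ofReal_zero, zero_smul, sub_self]
    · rw [if_neg h, hdw, sub_zero]
      simp only [if_neg h]
  have hDnorm : ∀ m, ‖D m‖ ≤ 1 := by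
    intro m
    refine shift_norm_le zero_le_one (Del m) (fun n => ?_)
    rw [hdw]
    dsimp only
    split
    · simp
    · exact abs_le.mpr ⟨by linarith [hw0 n], hw1 n⟩
  have hBD : ∀ m, ‖B - D m‖ ≤ w (k m - 1) := by
    intro m
    rw [hD]
    dsimp only
    rw [sub_sub_cancel]
    have := Rop_norm_le (w (k m - 1)) (k m - 1) (k m)
    rwa [abs_of_nonneg (hw0 _)] at this
  set S : ℕ → Hil →L[ℂ] Hil :=
    fun m => (adjoint (Vop (k m))) ∘L ((D m) ∘L (Vop (k m))) with hS
  have Sel : ∀ m n, S m (el n) = ((w (k m + n) : ℝ) : ℂ) • el (n+1) := by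
    intro m n
    rw [hS]
    dsimp only
    rw [ContinuousLinearMap.comp_apply, ContinuousLinearMap.comp_apply, Vop_el, Del,
      _root_.map_smul, Vop_adj_el, if_pos (by omega)]
    have e1 : dw m (n + k m) = w (k m + n) := by
      rw [hdw]
      dsimp only
      rw [if_neg (by have := hk m; omega)]
      congr 1
      omega
    have e2 : n + k m + 1 - k m = n + 1 := by omega
    rw [e1, e2]
  have hSnorm : ∀ m, ‖S m‖ ≤ 1 := fun m => shift_norm_le zero_le_one (Sel m)
    (fun n => abs_le.mpr ⟨by linarith [hw0 (k m + n)], hw1 _⟩)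
  have hAadj := adjoint_shift hA
  have hSadj := fun m => adjoint_shift (Sel m)
  have hDadj := fun m => adjoint_shift (Del m)
  have hint1 : ∀ m, (D m) ∘L Vop (k m) = Vop (k m) ∘L S m := by
    intro m
    refine clm_ext_el (fun n => ?_)
    rw [ContinuousLinearMap.comp_apply, ContinuousLinearMap.comp_apply, Vop_el, Del, Sel,
      _root_.map_smul, Vop_el]
    have e1 : dw m (n + k m) = w (k m + n) := by
      rw [hdw]; dsimp only
      rw [if_neg (by have := hk m; omega)]
      congr 1; omega
    rw [e1]
    congr 2
    omega
  have hint2 : ∀ m, (adjoint (D m)) ∘L Vop (k m) = Vop (k m) ∘L adjoint (S m) := by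
    intro m
    refine clm_ext_el (fun n => ?_)
    rw [ContinuousLinearMap.comp_apply, ContinuousLinearMap.comp_apply, Vop_el]
    cases n with
    | zero =>
      have e0 : (0 : ℕ) + k m = (k m - 1) + 1 := by have := hk m; omega
      rw [e0, (hDadj m).2, (hSadj m).1, map_zero]
      rw [hdw]
      dsimp only
      rw [if_pos rfl, Complex.ofReal_zero, zero_smul]
    | succ n =>
      have e0 : (n + 1) + k m = (n + k m) + 1 := by omega
      rw [e0, (hDadj m).2, (hSadj m).2, _root_.map_smul, Vop_el]
      have e1 : dw m (n + k m) = w (k m + n) := by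
        rw [hdw]; dsimp only
        rw [if_neg (by have := hk m; omega)]
        congr 1; omega
      rw [e1]
  have hSD : ∀ m p, ‖lft (S m) p‖ ≤ ‖lft (D m) p‖ := by
    intro m p
    have hit := lift_intertwine (hint1 m) (hint2 m) p
    have e : lft (S m) p = (adjoint (Vop (k m))) ∘L ((lft (D m) p) ∘L (Vop (k m))) := by
      rw [hit, ← ContinuousLinearMap.comp_assoc, Vop_adj_comp, ContinuousLinearMap.one_def,
        ContinuousLinearMap.id_comp]
    rw [e]
    have hVn : ‖Vop (k m)‖ ≤ 1 := Vop_norm_le (k m)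
    have hVan : ‖adjoint (Vop (k m))‖ ≤ 1 := by rw [adj_norm]; exact hVn
    calc ‖(adjoint (Vop (k m))) ∘L ((lft (D m) p) ∘L (Vop (k m)))‖
        ≤ ‖adjoint (Vop (k m))‖ * ‖(lft (D m) p) ∘L (Vop (k m))‖ :=
          ContinuousLinearMap.opNorm_comp_le _ _
      _ ≤ 1 * (‖lft (D m) p‖ * ‖Vop (k m)‖) := by
          refine mul_le_mul hVan (ContinuousLinearMap.opNorm_comp_le _ _) (norm_nonneg _)
            zero_le_one
      _ ≤ 1 * (‖lft (D m) p‖ * 1) := by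
          refine mul_le_mul_of_nonneg_left ?_ zero_le_one
          exact mul_le_mul_of_nonneg_left hVn (norm_nonneg _)
      _ = ‖lft (D m) p‖ := by ring
  -- convergence of weights
  have hwconv : ∀ n : ℕ, Tendsto (fun m => w (k m + n)) atTop (nhds (a n)) := by
    intro n
    refine Metric.tendsto_atTop.mpr (fun ε hε => ?_)
    obtain ⟨N, hN⟩ := exists_nat_gt (1/ε)
    refine ⟨max n N, fun m hm => ?_⟩
    have h1 : |w (k m + n) - a n| < 1/(m+1) := hmatch m n (le_trans (le_max_left n N) hm)
    have h2 : (N : ℝ) ≤ m := Nat.cast_le.mpr (le_trans (le_max_right n N) hm)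
    have h3 : 1/((m:ℝ)+1) < ε := by
      rw [div_lt_iff₀ (by positivity)]
      rw [div_lt_iff₀ hε] at hN
      nlinarith
    rw [Real.dist_eq]
    linarith
  have hoconv : ∀ n : ℕ, Tendsto (fun m => ((w (k m + n) : ℝ) : ℂ)) atTop (nhds ((a n : ℂ))) :=
    fun n => (Complex.continuous_ofReal.tendsto _).comp (hwconv n)
  have hconv1 : ∀ n, Tendsto (fun m => S m (el n)) atTop (nhds (A (el n))) := by
    intro n
    simp only [Sel, hA]
    exact (hoconv n).smul_const (el (n+1))
  have hconv2 : ∀ n, Tendsto (fun m => adjoint (S m) (el n)) atTop (nhds (adjoint A (el n))) := by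
    intro n
    cases n with
    | zero =>
      have e : (fun m => adjoint (S m) (el 0)) = fun _ => (0 : Hil) :=
        funext (fun m => (hSadj m).1)
      rw [e, hAadj.1]
      exact tendsto_const_nhds
    | succ n =>
      have e : (fun m => adjoint (S m) (el (n+1)))
          = fun m => ((w (k m + n) : ℝ) : ℂ) • el n := funext (fun m => (hSadj m).2 n)
      rw [e, hAadj.2 n]
      exact (hoconv n).smul_const (el n)
  have hSadjnorm : ∀ m, ‖adjoint (S m)‖ ≤ 1 := fun m => by rw [adj_norm]; exact hSnorm m
  have hAadjnorm : ‖adjoint A‖ ≤ 1 := by rw [adj_norm]; exact hAnorm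
  have hsotS := sot_of_basis hSnorm hAnorm hconv1
  have hsotSadj := sot_of_basis hSadjnorm hAadjnorm hconv2
  -- final assembly
  intro p
  rw [fa_lift_eq_lft, fa_lift_eq_lft]
  obtain ⟨M, L, hM, hL, HL⟩ := lift_bound_lip p
  refine le_of_forall_pos_le_add (fun ε hε => ?_)
  refine ContinuousLinearMap.opNorm_le_bound _ (by positivity) (fun x => ?_)
  refine le_of_forall_pos_le_add (fun δ hδ => ?_)
  have hsot := lift_sot hSnorm hAnorm hsotS hsotSadj p x
  have hev1 : ∀ᶠ m in atTop, ‖lft A p x - lft (S m) p x‖ < δ := by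
    have := (tendsto_iff_norm_sub_tendsto_zero.mp hsot)
    have h2 := this.eventually (eventually_lt_nhds hδ)
    refine h2.mono (fun m hm => ?_)
    rwa [norm_sub_rev] at hm
  have hev2 : ∀ᶠ m : ℕ in atTop, L * (1/((m:ℝ)+1)) ≤ ε := by
    have h0 : Tendsto (fun m : ℕ => 1/((m:ℝ)+1)) atTop (nhds 0) :=
      tendsto_one_div_add_atTop_nhds_zero_nat
    have h1 : Tendsto (fun m : ℕ => L * (1/((m:ℝ)+1))) atTop (nhds 0) := by
      simpa using h0.const_mul L
    exact h1.eventually (eventually_le_nhds hε)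
  obtain ⟨m, hm1, hm2⟩ := (hev1.and hev2).exists
  have step1 : ‖lft A p x‖ ≤ ‖lft (S m) p x‖ + δ := by
    have := norm_sub_norm_le (lft A p x) (lft (S m) p x)
    linarith [hm1, this]
  have step2 : ‖lft (S m) p x‖ ≤ ‖lft (D m) p‖ * ‖x‖ := by
    calc ‖lft (S m) p x‖ ≤ ‖lft (S m) p‖ * ‖x‖ := ContinuousLinearMap.le_opNorm _ _
      _ ≤ ‖lft (D m) p‖ * ‖x‖ := mul_le_mul_of_nonneg_right (hSD m p) (norm_nonneg _)
  have step3 : ‖lft (D m) p‖ ≤ ‖lft B p‖ + ε := by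
    have hlip := (HL (D m) B (hDnorm m) hBnorm).2
    have h4 : ‖D m - B‖ ≤ w (k m - 1) := by rw [norm_sub_rev]; exact hBD m
    have h5 : ‖lft (D m) p - lft B p‖ ≤ L * (1/((m:ℝ)+1)) := by
      calc ‖lft (D m) p - lft B p‖ ≤ L * ‖D m - B‖ := hlip
        _ ≤ L * (1/((m:ℝ)+1)) := by
            refine mul_le_mul_of_nonneg_left ?_ hL
            linarith [hnear m, h4]
    have := norm_sub_norm_le (lft (D m) p) (lft B p)
    linarith [hm2]
  calc ‖lft A p x‖ ≤ ‖lft (S m) p x‖ + δ := step1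
    _ ≤ ‖lft (D m) p‖ * ‖x‖ + δ := by linarith [step2]
    _ ≤ (‖lft B p‖ + ε) * ‖x‖ + δ := by
        have := mul_le_mul_of_nonneg_right step3 (norm_nonneg x)
        linarith
/-! ### Probability lemmas -/

lemma preim_ball {Ω : Type*} [MeasurableSpace Ω] (f : Ω → ℝ) (y : ℝ) (ε : ℝ) :
    {ω | |f ω - y| < ε} = f ⁻¹' Metric.ball y ε := by
  ext ω; simp [Metric.mem_ball, Real.dist_eq]

lemma null_of_not_essRange {Ω : Type*} [MeasurableSpace Ω] (P : Measure Ω)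
    {f : Ω → ℝ} (hf : Measurable f) {s : Set ℝ} (hs : ∀ y ∈ s, y ∉ essRange P f) :
    P (f ⁻¹' s) = 0 := by
  have hmap : P (f ⁻¹' s) ≤ (P.map f) s := Measure.le_map_apply (hf.aemeasurable) s
  have : (P.map f) s = 0 := by
    refine measure_null_of_locally_null s (fun y hy => ?_)
    obtain ⟨ε, hε, h0⟩ : ∃ ε > 0, P {ω | |f ω - y| < ε} = 0 := by
      have := hs y hy
      simp only [essRange, Set.mem_setOf_eq, not_forall] at this
      obtain ⟨ε, hε, h⟩ := this
      exact ⟨ε, hε, by simpa using h⟩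
    refine ⟨s ∩ Metric.ball y ε, inter_mem_nhdsWithin _ (Metric.ball_mem_nhds y hε), ?_⟩
    refine measure_mono_null Set.inter_subset_right ?_
    rw [Measure.map_apply hf measurableSet_ball]
    rw [preim_ball] at h0
    exact h0
  exact le_antisymm (le_trans hmap this.le) zero_le

lemma bounded_as {Ω : Type*} [MeasurableSpace Ω] (P : Measure Ω) [IsProbabilityMeasure P]
    (X : ℕ → Ω → ℝ) (hmeas : ∀ n, Measurable (X n))
    (hident : ∀ n, ProbabilityTheory.IdentDistrib (X n) (X 0) P P)
    (hER : essRange P (X 0) = Set.Icc (0 : ℝ) 1) :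
    P {ω | ∃ n, 1 < X n ω} = 0 := by
  have h0 : P (X 0 ⁻¹' Set.Ioi 1) = 0 := by
    refine null_of_not_essRange P (hmeas 0) (fun y hy => ?_)
    rw [hER]
    simp only [Set.mem_Ioi] at hy
    simp only [Set.mem_Icc, not_and_or, not_le]
    right; exact hy
  have hn : ∀ n, P (X n ⁻¹' Set.Ioi 1) = 0 := by
    intro n
    rw [(hident n).measure_mem_eq measurableSet_Ioi]
    exact h0
  have : {ω | ∃ n, 1 < X n ω} = ⋃ n, X n ⁻¹' Set.Ioi 1 := by
    ext ω; simp [Set.mem_Ioi]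
  rw [this]
  exact measure_iUnion_null hn

lemma pattern_as {Ω : Type*} [MeasurableSpace Ω] (P : Measure Ω) [IsProbabilityMeasure P]
    (X : ℕ → Ω → ℝ) (hmeas : ∀ n, Measurable (X n))
    (hindep : iIndepFun X P)
    (hident : ∀ n, ProbabilityTheory.IdentDistrib (X n) (X 0) P P)
    (y : ℕ → ℝ) (hy : ∀ j, y j ∈ essRange P (X 0)) (L : ℕ) (hL : 1 ≤ L)
    (δ : ℝ) (hδ : 0 < δ) :
    P {ω | ∃ i : ℕ, ∀ j, j < L → |X (i*L + j) ω - y j| < δ} = 1 := by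
  classical
  set E : ℕ → Set Ω := fun i => ⋂ j ∈ Finset.range L, X (i*L+j) ⁻¹' (Metric.ball (y j) δ)
    with hE
  set q : ℝ≥0∞ := ∏ j ∈ Finset.range L, P (X 0 ⁻¹' Metric.ball (y j) δ) with hq
  have hq1 : P (X 0 ⁻¹' Metric.ball (y 0) δ) ≤ 1 := prob_le_one
  have hmeasE : ∀ i, MeasurableSet (E i) := by
    intro i
    refine Finset.measurableSet_biInter _ (fun j _ => (hmeas _) measurableSet_ball)
  have hPE : ∀ i, P (E i) = q := by
    intro i
    have e1 : E i = ⋂ n ∈ Finset.image (fun j => i*L + j) (Finset.range L),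
        X n ⁻¹' (Metric.ball (y (n - i*L)) δ) := by
      rw [hE]
      ext ω
      simp only [Set.mem_iInter, Finset.mem_image, Finset.mem_range]
      constructor
      · rintro h n ⟨j, hj, rfl⟩
        have : i*L + j - i*L = j := by omega
        rw [this]
        exact h j hj
      · intro h j hj
        have := h (i*L+j) ⟨j, hj, rfl⟩
        have e : i*L + j - i*L = j := by omega
        rwa [e] at this
    rw [e1]
    rw [hindep.meas_biInter (fun n hn => ?_)]
    · rw [Finset.prod_image (fun a ha b hb h => by omega)]
      rw [hq]
      refine Finset.prod_congr rfl (fun j hj => ?_)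
      have e : i*L + j - i*L = j := by omega
      rw [e]
      exact (hident (i*L+j)).measure_mem_eq measurableSet_ball
    · exact ⟨Metric.ball (y (n - i*L)) δ, measurableSet_ball, rfl⟩
  have hqpos : q ≠ 0 := by
    rw [hq, Finset.prod_ne_zero_iff]
    intro j _
    have := hy j δ hδ
    rw [preim_ball] at this
    exact this.ne'
  have heq : {ω | ∃ i : ℕ, ∀ j, j < L → |X (i*L + j) ω - y j| < δ} = ⋃ i, E i := by
    ext ω
    simp only [Set.mem_setOf_eq, Set.mem_iUnion, hE, Set.mem_iInter, Set.mem_preimage,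
      Metric.mem_ball, Real.dist_eq, Finset.mem_range]
  set m : ℕ → MeasurableSpace Ω := fun n => MeasurableSpace.comap (X n) inferInstance with hm
  have h_le : ∀ n, m n ≤ _ := fun n => (hmeas n).comap_le
  have hindep2 : ∀ i : ℕ,
      Indep (⨆ n ∈ Set.Iio (i*L), m n) (⨆ n ∈ Set.Ici (i*L), m n) P := by
    intro i
    refine indep_iSup_of_disjoint h_le hindep.iIndep ?_
    exact Set.Iio_disjoint_Ici le_rfl
  have hbase : ∀ n, MeasurableSet[m n] (X n ⁻¹' Metric.ball (y (n - (n/L)*L)) δ) := by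
    intro n
    exact ⟨Metric.ball (y (n - (n/L)*L)) δ, measurableSet_ball, rfl⟩
  have hmE : ∀ i, MeasurableSet[⨆ n ∈ Set.Ici (i*L), m n] (E i) := by
    intro i
    rw [hE]
    refine MeasurableSet.biInter (Finset.range L).countable_toSet (fun j hj => ?_)
    have h1 : MeasurableSet[m (i*L+j)] (X (i*L+j) ⁻¹' Metric.ball (y j) δ) :=
      ⟨Metric.ball (y j) δ, measurableSet_ball, rfl⟩
    have h2 : m (i*L+j) ≤ ⨆ n ∈ Set.Ici (i*L), m n :=
      le_biSup _ (by simp [Set.mem_Ici])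
    exact h2 _ h1
  set A : ℕ → Set Ω := fun i => ⋂ i' ∈ Finset.range i, (E i')ᶜ with hA
  have hmA : ∀ i, MeasurableSet[⨆ n ∈ Set.Iio (i*L), m n] (A i) := by
    intro i
    rw [hA]
    refine MeasurableSet.biInter (Finset.range i).countable_toSet (fun i' hi' => ?_)
    have hi2 : i' < i := by exact Multiset.mem_range.mp hi'
    refine MeasurableSet.compl ?_
    rw [hE]
    refine MeasurableSet.biInter (Finset.range L).countable_toSet (fun j hj => ?_)
    have hj2 : j < L := by exact Multiset.mem_range.mp hj
    have h1 : MeasurableSet[m (i'*L+j)] (X (i'*L+j) ⁻¹' Metric.ball (y j) δ) :=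
      ⟨Metric.ball (y j) δ, measurableSet_ball, rfl⟩
    have h2 : m (i'*L+j) ≤ ⨆ n ∈ Set.Iio (i*L), m n := by
      refine le_biSup _ ?_
      simp only [Set.mem_Iio]
      calc i'*L + j < i'*L + L := by omega
        _ = (i'+1)*L := by ring
        _ ≤ i*L := Nat.mul_le_mul_right L (by omega)

    exact h2 _ h1
  have hstep : ∀ i, P (A (i+1)) = P (A i) * (1 - q) := by
    intro i
    have hAsucc : A (i+1) = A i ∩ (E i)ᶜ := by
      rw [hA]
      ext ω
      simp only [Set.mem_iInter, Set.mem_inter_iff, Finset.mem_range, Set.mem_compl_iff]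
      constructor
      · intro h
        exact ⟨fun i' hi' => h i' (by omega), h i (by omega)⟩
      · rintro ⟨h1, h2⟩ i' hi'
        rcases Nat.lt_or_ge i' i with h | h
        · exact h1 i' h
        · have : i' = i := by omega
          subst this; exact h2
    rw [hAsucc]
    have hmul := (Indep_iff _ _ _).mp (hindep2 i) (A i) (E i)ᶜ (hmA i) ((hmE i).compl)
    rw [hmul]
    congr 1
    rw [prob_compl_eq_one_sub (hmeasE i), hPE i]
  have hAbound : ∀ i, P (A i) ≤ (1 - q)^i := by
    intro i
    induction i with
    | zero => simpa using prob_le_one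
    | succ i ih =>
      rw [hstep i, pow_succ]
      exact mul_le_mul_left ih _
  have hq_lt : (1 : ℝ≥0∞) - q < 1 := ENNReal.sub_lt_self ENNReal.one_ne_top one_ne_zero hqpos
  have hlim : Tendsto (fun i : ℕ => ((1:ℝ≥0∞) - q)^i) atTop (nhds 0) :=
    ENNReal.tendsto_pow_atTop_nhds_zero_of_lt_one hq_lt
  have hsub : ∀ i, (⋃ i', E i')ᶜ ⊆ A i := by
    intro i
    rw [Set.compl_iUnion, hA]
    intro ω hω
    simp only [Set.mem_iInter] at hω ⊢
    intro i' _
    exact hω i'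
  have hbound : ∀ i, P ((⋃ i', E i')ᶜ) ≤ ((1:ℝ≥0∞) - q)^i :=
    fun i => le_trans (measure_mono (hsub i)) (hAbound i)
  have hzero : P ((⋃ i', E i')ᶜ) = 0 := by
    refine le_antisymm ?_ zero_le
    exact ge_of_tendsto' hlim hbound
  rw [heq]
  have hmeasU : MeasurableSet (⋃ i', E i') := MeasurableSet.iUnion hmeasE
  rw [← prob_compl_eq_zero_iff hmeasU]
  exact hzero
/-- if the essential range of `X_1` is `[0,1]`, then for a deterministic
unilateral weighted shift `A` with nonnegative weights, `A ⊲ T(ω)` almost surely when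
`‖A‖ ≤ 1`, and almost never when `‖A‖ > 1`. -/
theorem stmt_15
    {Ω : Type*} [MeasurableSpace Ω] (P : Measure Ω) [IsProbabilityMeasure P]
    (X : ℕ → Ω → ℝ) (C : ℝ)
    (hmeas : ∀ n, Measurable (X n))
    (hbdd : ∀ n ω, 0 ≤ X n ω ∧ X n ω ≤ C)
    (hindep : iIndepFun X P)
    (hident : ∀ n, IdentDistrib (X n) (X 0) P P)
    (T : Ω → Hil →L[ℂ] Hil)
    (hT : ∀ ω n, T ω (el n) = (X n ω : ℂ) • el (n + 1))
    (hER : essRange P (X 0) = Set.Icc (0 : ℝ) 1)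
    (a : ℕ → ℝ) (ha : ∀ n, 0 ≤ a n)
    (A : Hil →L[ℂ] Hil)
    (hA : ∀ n : ℕ, A (el n) = (a n : ℂ) • el (n + 1)) :
    (‖A‖ ≤ 1 → P {ω | OpDom A (T ω)} = 1) ∧
    (1 < ‖A‖ → P {ω | OpDom A (T ω)} = 0) := by
  classical
  have hG1null : P {ω | ∃ n, 1 < X n ω} = 0 := bounded_as P X hmeas hident hER
  have hG1meas : MeasurableSet {ω | ∃ n, 1 < X n ω} := by
    have : {ω | ∃ n, 1 < X n ω} = ⋃ n, X n ⁻¹' Set.Ioi 1 := by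
      ext ω; simp [Set.mem_Ioi]
    rw [this]
    exact MeasurableSet.iUnion (fun n => (hmeas n) measurableSet_Ioi)
  constructor
  · -- ‖A‖ ≤ 1
    intro hAle
    have ha1 : ∀ n, a n ≤ 1 := by
      intro n
      have h1 : ‖A (el n)‖ ≤ ‖A‖ * ‖el n‖ := ContinuousLinearMap.le_opNorm _ _
      rw [hA n, norm_smul, norm_el, norm_el, mul_one, mul_one] at h1
      have h2 : ‖((a n : ℝ) : ℂ)‖ = |a n| := by simp
      rw [h2] at h1
      have := le_abs_self (a n)
      linarith
    set y : ℕ → ℝ := fun j => if j = 0 then 0 else a (j - 1) with hy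
    have hyess : ∀ j, y j ∈ essRange P (X 0) := by
      intro j
      rw [hER]
      rw [hy]
      dsimp only
      split
      · exact ⟨le_refl 0, zero_le_one⟩
      · exact ⟨ha _, ha1 _⟩
    set G2 : ℕ → Set Ω := fun m =>
      {ω | ∃ i : ℕ, ∀ j, j < (m+2) → |X (i*(m+2) + j) ω - y j| < 1/(m+1)} with hG2def
    have hG2 : ∀ m, P (G2 m) = 1 := fun m =>
      pattern_as P X hmeas hindep hident y hyess (m+2) (by omega) (1/(m+1)) (by positivity)
    have hG2meas : ∀ m, MeasurableSet (G2 m) := by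
      intro m
      have e : G2 m = ⋃ i : ℕ, ⋂ j ∈ Finset.range (m+2),
          X (i*(m+2)+j) ⁻¹' Metric.ball (y j) (1/(m+1)) := by
        rw [hG2def]
        ext ω
        simp [Metric.mem_ball, Real.dist_eq, Finset.mem_range]
      rw [e]
      exact MeasurableSet.iUnion (fun i =>
        Finset.measurableSet_biInter _ (fun j _ => (hmeas _) measurableSet_ball))
    set G : Set Ω := {ω | ∃ n, 1 < X n ω}ᶜ ∩ ⋂ m, G2 m with hG
    have hPGc : P Gᶜ = 0 := by
      rw [hG, Set.compl_inter, compl_compl, Set.compl_iInter]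
      refine measure_union_null hG1null (measure_iUnion_null (fun m => ?_))
      rw [prob_compl_eq_zero_iff (hG2meas m)]
      exact hG2 m
    have hPG : P G = 1 := by
      have hGmeas : MeasurableSet G := by
        rw [hG]
        exact (hG1meas.compl).inter (MeasurableSet.iInter hG2meas)
      rwa [← prob_compl_eq_zero_iff hGmeas]
    have hsubset : G ⊆ {ω | OpDom A (T ω)} := by
      intro ω hω
      rw [hG] at hω
      obtain ⟨hb, hp⟩ := hω
      have hw1 : ∀ n, X n ω ≤ 1 := by
        intro n
        by_contra h
        exact hb ⟨n, by linarith⟩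
      have hw0 : ∀ n, 0 ≤ X n ω := fun n => (hbdd n ω).1
      have hex : ∀ m : ℕ, ∃ k : ℕ, 1 ≤ k ∧ X (k-1) ω < 1/(m+1) ∧
          ∀ j, j ≤ m → |X (k+j) ω - a j| < 1/(m+1) := by
        intro m
        have hm := Set.mem_iInter.mp hp m
        obtain ⟨i, hi⟩ := hm
        refine ⟨i*(m+2)+1, by omega, ?_, ?_⟩
        · have h0 := hi 0 (by omega)
          have hy0 : y 0 = 0 := by rw [hy]; dsimp only; rw [if_pos rfl]
          rw [hy0, add_zero, sub_zero] at h0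
          have e : i*(m+2)+1-1 = i*(m+2) := by omega
          rw [e]
          calc X (i*(m+2)) ω ≤ |X (i*(m+2)) ω| := le_abs_self _
            _ < 1/(m+1) := h0
        · intro j hj
          have h1 := hi (j+1) (by omega)
          have hyj : y (j+1) = a j := by
            rw [hy]; dsimp only; rw [if_neg (by omega)]; congr 1
          rw [hyj] at h1
          have e : i*(m+2) + (j+1) = (i*(m+2)+1) + j := by omega
          rwa [e] at h1
      choose k hk1 hk2 hk3 using hex
      exact det_core hA (hT ω) ha ha1 hw0 hw1 k hk1 hk2 hk3
    refine le_antisymm prob_le_one ?_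
    calc (1:ℝ≥0∞) = P G := hPG.symm
      _ ≤ P {ω | OpDom A (T ω)} := measure_mono hsubset
  · -- 1 < ‖A‖
    intro hAgt
    have hsubset : {ω | OpDom A (T ω)} ⊆ {ω | ∃ n, 1 < X n ω} := by
      intro ω hω
      by_contra hb
      simp only [Set.mem_setOf_eq, not_exists, not_lt] at hb
      have hw0 : ∀ n, 0 ≤ X n ω := fun n => (hbdd n ω).1
      have hTnorm : ‖T ω‖ ≤ 1 := shift_norm_le zero_le_one (hT ω)
        (fun n => abs_le.mpr ⟨by linarith [hw0 n], hb n⟩)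
      have := hω (FreeAlgebra.ι ℂ 0)
      rw [fa_lift_eq_lft, fa_lift_eq_lft, lft_ι0, lft_ι0] at this
      linarith
    exact le_antisymm (le_trans (measure_mono hsubset) hG1null.le) zero_le

end
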